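/- arXiv:2303.06176 — 2 statements merged into one kernel-verified Lean document; each statement's English description precedes it below -/
import Mathlib

section
/- The arcsine measure with density 1/(π√(x(1−x))) on [0,1] is invariant under the logistic map f_4(x) = 4x(1−x): the pushforward of this measure under f_4 equals itself. -/
/-!
The arcsine law is the image of the uniform law on `[0, 1]` under its quantile function
`Q θ = sin² (π θ / 2)`, the inverse of its distribution function `(2 / π) arcsin √x`.
Since `4 sin² t cos² t = sin² (2 t)`, `Q` conjugates the logistic map to the doubling
`θ ↦ 2 θ`, which sends the uniform law on `[0, 1]` to the uniform law on `[0, 2]`; as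
`Q (2 - θ) = Q θ`, the image of the latter under `Q` is again the arcsine law.
-/
open MeasureTheory Set Real

namespace MeasureTheory

theorem map_withDensity_abs_deriv_eq_volume {s : Set ℝ} {f f' : ℝ → ℝ}
    (hs : NullMeasurableSet s) (hf' : ∀ x ∈ s, HasDerivWithinAt f (f' x) s x) (hf : InjOn f s) :
    Measure.map f ((volume.restrict s).withDensity fun x => ENNReal.ofReal |f' x|) =
      volume.restrict (f '' s) := by
  simpa only [ContinuousLinearMap.smulRight_one_eq_toSpanSingleton,
    ContinuousLinearMap.det_toSpanSingleton] using
    map_withDensity_abs_det_fderiv_eq_addHaar volume hs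
      (fun x hx => (hf' x hx).hasFDerivWithinAt) hf

theorem withDensity_abs_deriv_eq_map_of_leftInvOn {s : Set ℝ} {f f' g : ℝ → ℝ}
    (hs : MeasurableSet s) (hf' : ∀ x ∈ s, HasDerivWithinAt f (f' x) s x)
    (hgf : LeftInvOn g f s) (hg : Measurable g) (hf : Measurable f) :
    (volume.restrict s).withDensity (fun x => ENNReal.ofReal |f' x|) =
      Measure.map g (volume.restrict (f '' s)) := by
  rw [← map_withDensity_abs_deriv_eq_volume hs.nullMeasurableSet hf' hgf.injOn,
    Measure.map_map hg hf]
  refine Measure.map_id.symm.trans (Measure.map_congr ?_)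
  filter_upwards [withDensity_absolutelyContinuous _ _ (ae_restrict_mem hs)] with x hx
  exact (hgf hx).symm

end MeasureTheory

namespace Real

theorem map_const_mul_volume_restrict_Icc {c : ℝ} (hc : 0 < c) (a b : ℝ) :
    Measure.map (c * ·) (volume.restrict (Icc a b)) =
      ENNReal.ofReal c⁻¹ • volume.restrict (Icc (c * a) (c * b)) := by
  have hpre : (c * ·) ⁻¹' Icc (c * a) (c * b) = Icc a b := by
    rw [preimage_const_mul_Icc₀ _ _ hc, mul_div_cancel_left₀ _ hc.ne',
      mul_div_cancel_left₀ _ hc.ne']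
  rw [← hpre, ← Measure.restrict_map (measurable_const_mul c) measurableSet_Icc,
    map_volume_mul_left hc.ne', abs_of_pos (inv_pos.2 hc), Measure.restrict_smul]

theorem map_const_sub_volume_restrict_Icc (c a b : ℝ) :
    Measure.map (c - ·) (volume.restrict (Icc a b)) = volume.restrict (Icc (c - b) (c - a)) := by
  have h := (volume.measurePreserving_sub_left c).restrict_preimage
    (measurableSet_Icc (a := c - b) (b := c - a))
  rw [preimage_const_sub_Icc, sub_sub_cancel, sub_sub_cancel] at h
  exact h.map_eq

theorem volume_restrict_Icc_eq_add {a b c : ℝ} (hab : a ≤ b) (hbc : b ≤ c) :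
    volume.restrict (Icc a c) = volume.restrict (Icc a b) + volume.restrict (Icc b c) := by
  rw [← Ico_union_Icc_eq_Icc hab hbc, Measure.restrict_union _ measurableSet_Icc,
    Measure.restrict_congr_set Ico_ae_eq_Icc]
  exact Set.disjoint_left.2 fun x hx hx' => (hx.2.trans_le hx'.1).false

theorem map_comp_two_mul_volume_restrict_Icc {α : Type*} [MeasurableSpace α] {g : ℝ → α}
    (hg : Measurable g) (hg_symm : ∀ x, g (2 - x) = g x) :
    Measure.map (g ∘ (2 * ·)) (volume.restrict (Icc 0 1)) =
      Measure.map g (volume.restrict (Icc 0 1)) := by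
  have hright : Measure.map g (volume.restrict (Icc 1 2)) =
      Measure.map g (volume.restrict (Icc 0 1)) := by
    rw [show Icc (1 : ℝ) 2 = Icc (2 - 1) (2 - 0) by norm_num,
      ← map_const_sub_volume_restrict_Icc, Measure.map_map hg (measurable_const_sub 2)]
    exact congrArg (Measure.map · _) (funext hg_symm)
  rw [← Measure.map_map hg (measurable_const_mul 2), map_const_mul_volume_restrict_Icc two_pos,
    mul_zero, mul_one, volume_restrict_Icc_eq_add zero_le_one one_le_two, Measure.map_smul,
    Measure.map_add _ _ hg, hright, ← two_smul ENNReal, smul_smul,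
    ENNReal.ofReal_inv_of_pos two_pos, ENNReal.ofReal_ofNat,
    ENNReal.inv_mul_cancel two_ne_zero ENNReal.ofNat_ne_top, one_smul]

end Real

noncomputable def arcsineCDF (x : ℝ) : ℝ := 2 / π * arcsin √x

noncomputable def arcsineQuantile (θ : ℝ) : ℝ := sin (π * θ / 2) ^ 2

noncomputable def arcsineMeasure : Measure ℝ :=
  (volume.restrict (Icc 0 1)).withDensity fun x => ENNReal.ofReal (1 / (π * √(x * (1 - x))))

@[fun_prop]
theorem continuous_arcsineCDF : Continuous arcsineCDF := by
  unfold arcsineCDF; fun_prop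

@[fun_prop]
theorem continuous_arcsineQuantile : Continuous arcsineQuantile := by
  unfold arcsineQuantile; fun_prop

theorem strictMonoOn_arcsineCDF : StrictMonoOn arcsineCDF (Icc 0 1) := by
  have hsqrt : MapsTo (√·) (Icc 0 1) (Icc (-1) 1) := fun x hx =>
    ⟨by linarith [sqrt_nonneg x], sqrt_le_one.2 hx.2⟩
  intro x hx y hy hxy
  exact mul_lt_mul_of_pos_left
    (strictMonoOn_arcsin (hsqrt hx) (hsqrt hy) (strictMonoOn_sqrt hx.1 hy.1 hxy)) (by positivity)

theorem image_arcsineCDF_Ioo : arcsineCDF '' Ioo 0 1 = Ioo 0 1 := by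
  simpa [arcsineCDF, pi_ne_zero] using
    continuous_arcsineCDF.continuousOn.image_Ioo_of_strictMonoOn zero_le_one
      strictMonoOn_arcsineCDF

theorem arcsineQuantile_arcsineCDF {x : ℝ} (hx : x ∈ Icc 0 1) :
    arcsineQuantile (arcsineCDF x) = x := by
  have hangle : π * (2 / π * arcsin √x) / 2 = arcsin √x := by field_simp
  rw [arcsineQuantile, arcsineCDF, hangle,
    sin_arcsin (by linarith [sqrt_nonneg x]) (sqrt_le_one.2 hx.2), sq_sqrt hx.1]

theorem hasDerivAt_arcsineCDF {x : ℝ} (hx : x ∈ Ioo 0 1) :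
    HasDerivAt arcsineCDF (1 / (π * √(x * (1 - x)))) x := by
  obtain ⟨h0, h1⟩ := hx
  have hsqrt_lt : √x < 1 := (sqrt_lt' one_pos).2 (by linarith)
  have h := ((hasDerivAt_arcsin (by linarith [sqrt_nonneg x]) hsqrt_lt.ne).comp x
    (hasDerivAt_sqrt h0.ne')).const_mul (2 / π)
  refine h.congr_deriv ?_
  rw [sq_sqrt h0.le, sqrt_mul h0.le]
  field_simp

theorem arcsineMeasure_eq_map_arcsineQuantile :
    arcsineMeasure = Measure.map arcsineQuantile (volume.restrict (Icc 0 1)) := by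
  have hIoo : volume.restrict (Icc (0 : ℝ) 1) = volume.restrict (Ioo 0 1) :=
    Measure.restrict_congr_set Ioo_ae_eq_Icc |>.symm
  have hcov := withDensity_abs_deriv_eq_map_of_leftInvOn measurableSet_Ioo
    (fun x hx => (hasDerivAt_arcsineCDF hx).hasDerivWithinAt)
    (fun x hx => arcsineQuantile_arcsineCDF (Ioo_subset_Icc_self hx))
    continuous_arcsineQuantile.measurable continuous_arcsineCDF.measurable
  rw [image_arcsineCDF_Ioo] at hcov
  rw [arcsineMeasure, hIoo, ← hcov]
  congr with x
  rw [abs_of_nonneg (by positivity)]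

theorem four_mul_arcsineQuantile_mul_one_sub (θ : ℝ) :
    4 * arcsineQuantile θ * (1 - arcsineQuantile θ) = arcsineQuantile (2 * θ) := by
  have h := sin_two_mul (π * θ / 2)
  rw [show 2 * (π * θ / 2) = π * (2 * θ) / 2 by ring] at h
  rw [arcsineQuantile, arcsineQuantile, h, ← cos_sq']
  ring

theorem arcsineQuantile_two_sub (θ : ℝ) : arcsineQuantile (2 - θ) = arcsineQuantile θ := by
  rw [arcsineQuantile, arcsineQuantile, show π * (2 - θ) / 2 = π - π * θ / 2 by ring,
    sin_pi_sub]

theorem arcsine_invariant_logistic_four :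
    Measure.map (fun x : ℝ => 4 * x * (1 - x))
      ((volume.restrict (Set.Icc (0:ℝ) 1)).withDensity
        (fun x => ENNReal.ofReal (1 / (Real.pi * Real.sqrt (x * (1 - x)))))) =
    (volume.restrict (Set.Icc (0:ℝ) 1)).withDensity
      (fun x => ENNReal.ofReal (1 / (Real.pi * Real.sqrt (x * (1 - x))))) := by
  change Measure.map _ arcsineMeasure = arcsineMeasure
  have hconj :
      (fun x : ℝ => 4 * x * (1 - x)) ∘ arcsineQuantile = arcsineQuantile ∘ (2 * ·) :=
    funext four_mul_arcsineQuantile_mul_one_sub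
  rw [arcsineMeasure_eq_map_arcsineQuantile, Measure.map_map (by fun_prop)
    continuous_arcsineQuantile.measurable, hconj,
    Real.map_comp_two_mul_volume_restrict_Icc continuous_arcsineQuantile.measurable
      arcsineQuantile_two_sub]
end

section
/- If X = U·E·V† is a singular value decomposition with U, V unitary and E diagonal, then the non-Hermitian matrix logistic map X' = a·X·(I − V·U†·X) satisfies X' = U·(a·E·(I − E))·V†; in particular the unitary factors U and V are preserved and the singular values evolve by the scalar logistic map. -/
/-! Since `Vᴴ V = 1` and `Uᴴ U = 1`, the inner factors of `X (V Uᴴ) X = U E Vᴴ V Uᴴ U E Vᴴ` cancel,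
leaving `U E² Vᴴ`; hence `X (1 - V Uᴴ X) = U (E - E²) Vᴴ`. This works in any ring, with `Uᴴ`
and `Vᴴ` replaced by arbitrary left inverses of `U` and `V`. -/

open Matrix

section LeftInverse

variable {R : Type*} [Ring R] {u u' v v' : R}

theorem mul_mul_mul_mul_of_mul_eq_one (hu : u' * u = 1) (hv : v' * v = 1) (e f : R) :
    u * e * v' * (v * u') * (u * f * v') = u * (e * f) * v' := by
  calc u * e * v' * (v * u') * (u * f * v')
      = u * e * ((v' * v) * ((u' * u) * (f * v'))) := by noncomm_ring
    _ = u * (e * f) * v' := by rw [hu, hv]; noncomm_ring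

theorem mul_one_sub_mul_mul_of_mul_eq_one (hu : u' * u = 1) (hv : v' * v = 1) (e : R) :
    u * e * v' * (1 - v * u' * (u * e * v')) = u * (e * (1 - e)) * v' := by
  rw [mul_sub, mul_one, ← mul_assoc, mul_mul_mul_mul_of_mul_eq_one hu hv, mul_sub, mul_one,
    mul_sub, sub_mul]

end LeftInverse

theorem nonhermitian_logistic_preserves_svd_general {n : Type*} [Fintype n] [DecidableEq n]
    (a : ℝ) (X U V E : Matrix n n ℂ)
    (hU : U ∈ Matrix.unitaryGroup n ℂ) (hV : V ∈ Matrix.unitaryGroup n ℂ)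
    (hdec : X = U * E * Vᴴ) :
    a • (X * (1 - (V * Uᴴ) * X)) = U * (a • (E * (1 - E))) * Vᴴ := by
  subst hdec
  rw [Matrix.mul_smul, Matrix.smul_mul]
  exact congrArg (a • ·) (mul_one_sub_mul_mul_of_mul_eq_one hU.1 hV.1 E)

theorem nonhermitian_logistic_preserves_svd {n : Type*} [Fintype n] [DecidableEq n]
    (a : ℝ) (X U V E : Matrix n n ℂ)
    (hU : U ∈ Matrix.unitaryGroup n ℂ) (hV : V ∈ Matrix.unitaryGroup n ℂ)
    (hE : E.IsDiag) (hEntries : ∀ i, (E i i).im = 0 ∧ 0 ≤ (E i i).re)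
    (hdec : X = U * E * Vᴴ) :
    a • (X * (1 - (V * Uᴴ) * X)) = U * (a • (E * (1 - E))) * Vᴴ :=
  nonhermitian_logistic_preserves_svd_general a X U V E hU hV hdec
end
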